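/- arXiv:math/0606485 — 5 statements merged into one kernel-verified Lean document; each statement's English description precedes it below -/
import Mathlib

section
/- Let q ≡ 3 (mod 4) be an odd prime power. For any fixed i ∈ F_q*, the number of k ∈ F_q such that f(i,1,k) = i − (i−1−k)²/4 is a square in F_q (including zero) is at least (q+1)/2. -/
open scoped Classical

/-- For `q ≡ 3 (mod 4)` and fixed `i ≠ 0`, the number of `k ∈ F_q`
such that `f(i,1,k) = i - (i-1-k)^2/4` is a square (possibly zero) is at least
`(q+1)/2`. -/
theorem stmt8 (F : Type*) [Field F] [Fintype F]
    (q : ℕ) (hq : Fintype.card F = q) (hq3 : q % 4 = 3)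
    (i : F) (hi : i ≠ 0) :
    (q + 1) / 2 ≤
      (Finset.univ.filter (fun k : F => IsSquare (i - (i - 1 - k) ^ 2 / 4))).card := by
  classical
  have hchar : ringChar F ≠ 2 := by
    intro h
    have := FiniteField.even_card_iff_char_two.mp h
    rw [hq] at this
    omega
  have h2 : (2 : F) ≠ 0 := Ring.two_ne_zero hchar
  have h4 : (4 : F) ≠ 0 := by
    intro h
    have h' : (2 : F) * 2 = 0 := by rw [← h]; norm_num
    exact h2 (by rcases mul_eq_zero.mp h' with h'' | h'' <;> exact h'')
  have hns : ¬ IsSquare (-1 : F) := by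
    rw [FiniteField.isSquare_neg_one_iff, hq]
    simp [hq3]
  have key : ∀ a : F, ¬ IsSquare a → IsSquare (-a) := by
    intro a ha
    have ha0 : a ≠ 0 := by rintro rfl; exact ha ⟨0, by ring⟩
    have e1 : quadraticChar F a = -1 := (quadraticChar_neg_one_iff_not_isSquare).mpr ha
    have e2 : quadraticChar F (-1 : F) = -1 :=
      (quadraticChar_neg_one_iff_not_isSquare).mpr hns
    have e3 : quadraticChar F (-a) = 1 := by
      have h' : (-a : F) = (-1) * a := by ring
      rw [h', map_mul, e1, e2]; norm_num
    exact (quadraticChar_one_iff_isSquare (neg_ne_zero.mpr ha0)).mp e3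
  set T := Finset.univ.filter (fun t : F => IsSquare (i - t ^ 2)) with hT
  set Tc := Finset.univ.filter (fun t : F => ¬ IsSquare (i - t ^ 2)) with hTc
  -- change of variables
  have hcardT : (Finset.univ.filter
      (fun k : F => IsSquare (i - (i - 1 - k) ^ 2 / 4))).card = T.card := by
    refine Finset.card_bij' (fun k _ => (i - 1 - k) / 2) (fun t _ => i - 1 - 2 * t)
      ?_ ?_ ?_ ?_
    · intro k hk
      simp only [Finset.mem_filter, Finset.mem_univ, true_and] at hk
      simp only [hT, Finset.mem_filter, Finset.mem_univ, true_and]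
      have h' : i - ((i - 1 - k) / 2) ^ 2 = i - (i - 1 - k) ^ 2 / 4 := by
        field_simp
        ring
      rw [h']; exact hk
    · intro t ht
      simp only [hT, Finset.mem_filter, Finset.mem_univ, true_and] at ht
      simp only [Finset.mem_filter, Finset.mem_univ, true_and]
      have h' : i - (i - 1 - (i - 1 - 2 * t)) ^ 2 / 4 = i - t ^ 2 := by
        field_simp
        ring
      rw [h']; exact ht
    · intro k _
      field_simp
      ring
    · intro t _
      field_simp
      ring
  rw [hcardT]
  have hsum : T.card + Tc.card = q := by
    rw [hT, hTc, Finset.card_filter_add_card_filter_not, Finset.card_univ, hq]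
  have hsq : ∀ t ∈ Tc, IsSquare (t ^ 2 - i) := by
    intro t ht
    simp only [hTc, Finset.mem_filter, Finset.mem_univ, true_and] at ht
    have h' := key _ ht
    rwa [neg_sub] at h'
  set s : F → F := fun t => if h : IsSquare (t ^ 2 - i) then h.choose else 0 with hs
  have hs_spec : ∀ t ∈ Tc, s t * s t = t ^ 2 - i := by
    intro t ht
    have h := hsq t ht
    simp only [hs, dif_pos h]
    exact h.choose_spec.symm
  have hs_ne : ∀ t ∈ Tc, s t ≠ 0 := by
    intro t ht h0
    have h := hs_spec t ht
    rw [h0, mul_zero] at h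
    simp only [hTc, Finset.mem_filter, Finset.mem_univ, true_and] at ht
    exact ht ⟨0, by linear_combination h⟩
  have he : ∀ t ∈ Tc, ∀ b : Bool,
      (if b = true then s t else - s t) * (if b = true then s t else - s t)
        = t ^ 2 - i := by
    intro t ht b
    cases b <;> simpa using hs_spec t ht
  have hprod : ∀ t ∈ Tc, ∀ b : Bool,
      (t + (if b = true then s t else - s t)) * (t - (if b = true then s t else - s t)) = i := by
    intro t ht b
    have := he t ht b
    linear_combination -this
  have hinj : 2 * Tc.card ≤ q - 1 := by
    have hcard : ((Tc ×ˢ (Finset.univ : Finset Bool))).card ≤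
        ((Finset.univ : Finset F).erase 0).card := by
      apply Finset.card_le_card_of_injOn
        (fun p => p.1 + (if p.2 = true then s p.1 else - s p.1))
      · rintro ⟨t, b⟩ hp
        simp only [Finset.coe_product, Set.mem_prod, Finset.mem_coe, Finset.mem_univ, and_true] at hp
        simp only [Finset.mem_coe, Finset.mem_erase, Finset.mem_univ, and_true]
        intro h0
        have hp' := hprod t hp b
        rw [h0, zero_mul] at hp'
        exact hi hp'.symm
      · rintro ⟨t₁, b₁⟩ hp₁ ⟨t₂, b₂⟩ hp₂ heq
        simp only [Finset.coe_product, Set.mem_prod, Finset.mem_coe,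
          Finset.mem_univ, and_true] at hp₁ hp₂
        simp only at heq
        have h1 := hprod t₁ hp₁ b₁
        have h2' := hprod t₂ hp₂ b₂
        have ha0 : t₂ + (if b₂ = true then s t₂ else - s t₂) ≠ 0 := by
          intro h0
          rw [h0, zero_mul] at h2'
          exact hi h2'.symm
        rw [heq] at h1
        have hc := mul_left_cancel₀ ha0 (h1.trans h2'.symm)
        -- hc : t₁ - e₁ = t₂ - e₂ ; heq : t₁ + e₁ = t₂ + e₂
        have ht12 : t₁ = t₂ := by
          have h2t : (2 : F) * t₁ = 2 * t₂ := by linear_combination heq + hc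
          exact mul_left_cancel₀ h2 h2t
        subst ht12
        have hee : (if b₁ = true then s t₁ else - s t₁)
            = (if b₂ = true then s t₁ else - s t₁) := by
          exact add_left_cancel heq
        have hb : b₁ = b₂ := by
          have hsne := hs_ne t₁ hp₁
          cases b₁ <;> cases b₂
          · rfl
          · exfalso
            simp only [Bool.false_eq_true, if_false, if_true] at hee
            exact hsne (mul_left_cancel₀ h2
              (show (2 : F) * s t₁ = 2 * 0 by linear_combination -hee))
          · exfalso
            simp only [Bool.false_eq_true, if_false, if_true] at hee
            exact hsne (mul_left_cancel₀ h2
              (show (2 : F) * s t₁ = 2 * 0 by linear_combination hee))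
          · rfl
        rw [hb]
    have e1 : ((Tc ×ˢ (Finset.univ : Finset Bool))).card = Tc.card * 2 := by
      rw [Finset.card_product, Finset.card_univ, Fintype.card_bool]
    have e2 : ((Finset.univ : Finset F).erase 0).card = q - 1 := by
      rw [Finset.card_erase_of_mem (Finset.mem_univ 0), Finset.card_univ, hq]
    omega
  omega
end

section
/- Let q ≡ 1 (mod 4) be an odd prime power, a, b, c ∈ F_q* with ab = c², and i, j ∈ F_q* with i ≠ j. Then the number of pairs (u,v) ∈ C_i × C_j such that u + v is a nonzero point of the null cone {(x,y) ≠ (0,0) : ax² + by² = 0} equals 2(q−1). -/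
open scoped Classical
lemma nullcone_card (F : Type*) [Field F] [Fintype F]
    (a b s : F) (ha : a ≠ 0) (hb : b ≠ 0) (hs : s ≠ 0) (h2 : (2:F) ≠ 0)
    (hsq : a * s^2 = -b) :
    (Finset.univ.filter (fun p : F × F => p ≠ 0 ∧ a*p.1^2 + b*p.2^2 = 0)).card
      = 2 * (Fintype.card F - 1) := by
  classical
  have hss : s ≠ -s := by
    intro h
    apply hs
    have h3 : 2 * s = 0 := by linear_combination h
    rcases mul_eq_zero.1 h3 with h' | h'
    · exact absurd h' h2
    · exact h'
  have key : ∀ p : F × F, (p ≠ 0 ∧ a*p.1^2 + b*p.2^2 = 0) →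
      p.2 ≠ 0 ∧ (p.1 = s * p.2 ∨ p.1 = -s * p.2) := by
    rintro ⟨x, y⟩ ⟨hne, heq⟩
    have hy : y ≠ 0 := by
      rintro rfl
      have hx : x = 0 := by
        have h4 : a * x^2 = 0 := by linear_combination heq
        have := mul_eq_zero.1 h4
        simpa [ha, pow_eq_zero_iff] using this
      exact hne (by simp [hx])
    refine ⟨hy, ?_⟩
    have h5 : a * (x - s*y) * (x + s*y) = 0 := by linear_combination heq - y^2 * hsq
    rcases mul_eq_zero.1 h5 with h' | h'
    · rcases mul_eq_zero.1 h' with h'' | h''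
      · exact absurd h'' ha
      · left; linear_combination h''
    · right; linear_combination h'
  rw [Finset.card_bij' (fun p _ => ((p.1/p.2 : F), (p.2 : F)))
    (fun e _ => ((e.1 * e.2, e.2) : F × F)) ?_ ?_ ?_ ?_
    (t := ({s, -s} : Finset F) ×ˢ (Finset.univ.filter (fun y : F => y ≠ 0)))]
  · rw [Finset.card_product]
    rw [Finset.card_pair hss, Finset.filter_ne', Finset.card_erase_of_mem (Finset.mem_univ 0),
      Finset.card_univ]
  · intro p hp
    simp only [Finset.mem_filter, Finset.mem_univ, true_and] at hp
    obtain ⟨hy, hor⟩ := key p hp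
    simp only [Finset.mem_product, Finset.mem_insert, Finset.mem_singleton,
      Finset.mem_filter, Finset.mem_univ, true_and]
    refine ⟨?_, hy⟩
    rcases hor with h | h
    · left; rw [h]; field_simp
    · right; rw [h]; field_simp
  · intro e he
    simp only [Finset.mem_product, Finset.mem_insert, Finset.mem_singleton,
      Finset.mem_filter, Finset.mem_univ, true_and] at he
    obtain ⟨hor, hy⟩ := he
    simp only [Finset.mem_filter, Finset.mem_univ, true_and]
    constructor
    · intro h
      rw [Prod.ext_iff] at h
      exact hy h.2
    · rcases hor with h | h <;> rw [h] <;> linear_combination e.2^2 * hsq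
  · intro p hp
    simp only [Finset.mem_filter, Finset.mem_univ, true_and] at hp
    obtain ⟨hy, _⟩ := key p hp
    ext <;> simp [div_mul_cancel₀, hy]
  · intro e he
    simp only [Finset.mem_product, Finset.mem_filter, Finset.mem_univ, true_and] at he
    ext <;> simp [mul_div_cancel_right₀, he.2]
lemma alg1 (F : Type*) [Field F] (a b i j w1 w2 : F)
    (ha : a ≠ 0) (hb : b ≠ 0) (h2 : (2:F) ≠ 0) (hij : i - j ≠ 0)
    (hw1 : w1 ≠ 0) (hw2 : w2 ≠ 0) (hnull : a*w1^2 + b*w2^2 = 0) :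
    a*((i-j)/(2*a*w1) + ((i - (i-j)^2/(4*(a*w1^2)))/(i-j))*w1)^2
      + b*(((i - (i-j)^2/(4*(a*w1^2)))/(i-j))*w2)^2 = i := by
  have h4 : (4:F) ≠ 0 := by
    have := mul_ne_zero h2 h2
    norm_num at this
    simpa using this
  obtain ⟨T, hT⟩ : ∃ T : F, T = (i - (i-j)^2/(4*(a*w1^2)))/(i-j) := ⟨_, rfl⟩
  rw [← hT]
  have s1 : (i-j)*T = i - (i-j)^2/(4*(a*w1^2)) := by
    rw [hT, mul_div_cancel₀ _ hij]
  have s2 : a*((i-j)/(2*a*w1) + T*w1)^2 + b*(T*w2)^2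
      = (i-j)^2/(4*(a*w1^2)) + (i-j)*T + T^2*(a*w1^2 + b*w2^2) := by
    field_simp
    ring
  rw [s2, hnull, s1]
  ring

lemma alg2 (F : Type*) [Field F] (a b i j w1 w2 : F)
    (ha : a ≠ 0) (hb : b ≠ 0) (h2 : (2:F) ≠ 0) (hij : i - j ≠ 0)
    (hw1 : w1 ≠ 0) (hw2 : w2 ≠ 0) (hnull : a*w1^2 + b*w2^2 = 0) :
    a*(w1 - ((i-j)/(2*a*w1) + ((i - (i-j)^2/(4*(a*w1^2)))/(i-j))*w1))^2
      + b*(w2 - ((i - (i-j)^2/(4*(a*w1^2)))/(i-j))*w2)^2 = j := by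
  have h4 : (4:F) ≠ 0 := by
    have := mul_ne_zero h2 h2
    norm_num at this
    simpa using this
  have G1 := alg1 F a b i j w1 w2 ha hb h2 hij hw1 hw2 hnull
  obtain ⟨T, hT⟩ : ∃ T : F, T = (i - (i-j)^2/(4*(a*w1^2)))/(i-j) := ⟨_, rfl⟩
  rw [← hT] at G1 ⊢
  obtain ⟨u1, hu1⟩ : ∃ u1 : F, u1 = (i-j)/(2*a*w1) + T*w1 := ⟨_, rfl⟩
  rw [← hu1] at G1 ⊢
  have sB : a*w1*u1 + b*w2*(T*w2) = (i-j)/2 + T*(a*w1^2 + b*w2^2) := by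
    rw [hu1]
    field_simp
    ring
  rw [hnull] at sB
  have e : a*(w1-u1)^2 + b*(w2-T*w2)^2
      = (a*w1^2+b*w2^2) - 2*(a*w1*u1+b*w2*(T*w2)) + (a*u1^2 + b*(T*w2)^2) := by
    ring
  rw [e, hnull, sB, G1]
  field_simp
  ring

lemma alg_unique (F : Type*) [Field F] (a b i j w1 w2 x1 x2 y1 y2 : F)
    (ha : a ≠ 0) (hb : b ≠ 0) (h2 : (2:F) ≠ 0) (hij : i - j ≠ 0)
    (hw1 : w1 ≠ 0) (hw2 : w2 ≠ 0) (hnull : a*w1^2 + b*w2^2 = 0)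
    (hx1 : a*x1^2 + b*x2^2 = i) (hx2 : a*(w1-x1)^2 + b*(w2-x2)^2 = j)
    (hy1 : a*y1^2 + b*y2^2 = i) (hy2 : a*(w1-y1)^2 + b*(w2-y2)^2 = j) :
    x1 = y1 ∧ x2 = y2 := by
  have hBx : 2*(a*w1*x1 + b*w2*x2) = i - j := by linear_combination hnull + hx1 - hx2
  have hBy : 2*(a*w1*y1 + b*w2*y2) = i - j := by linear_combination hnull + hy1 - hy2
  have hBd0 : 2*(a*w1*(x1-y1) + b*w2*(x2-y2)) = 0 := by linear_combination hBx - hBy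
  have hBd : a*w1*(x1-y1) + b*w2*(x2-y2) = 0 := by
    rcases mul_eq_zero.1 hBd0 with h | h
    · exact absurd h h2
    · exact h
  have hd12' : (a*w1) * ((x1-y1)*w2 - w1*(x2-y2)) = 0 := by
    linear_combination w2*hBd - (x2-y2)*hnull
  have hd12 : (x1-y1)*w2 = w1*(x2-y2) := by
    rcases mul_eq_zero.1 hd12' with h | h
    · exact absurd h (mul_ne_zero ha hw1)
    · linear_combination h
  have hQd : a*(x1-y1)*(x1+y1) + b*(x2-y2)*(x2+y2) = 0 := by
    linear_combination hx1 - hy1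
  have hS : 2*(a*w1*(x1+y1) + b*w2*(x2+y2)) = 2*(i-j) := by
    linear_combination hBx + hBy
  have h6 : (x2-y2)*(i-j)*(2*w2) = 0 := by
    linear_combination 2*w2^2*hQd - 2*a*(x1+y1)*w2*hd12 - (x2-y2)*w2*hS
  have hx2y2 : x2 = y2 := by
    rcases mul_eq_zero.1 h6 with h | h
    · rcases mul_eq_zero.1 h with h' | h'
      · linear_combination h'
      · exact absurd h' hij
    · rcases mul_eq_zero.1 h with h' | h'
      · exact absurd h' h2
      · exact absurd h' hw2
  refine ⟨?_, hx2y2⟩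
  rw [hx2y2] at hd12
  have : (x1 - y1)*w2 = 0 := by linear_combination hd12
  rcases mul_eq_zero.1 this with h | h
  · linear_combination h
  · exact absurd h hw2


open scoped Classical

/-- For `q ≡ 1 (mod 4)` and distinct nonzero `i, j`, the number of
pairs `(u,v) ∈ C_i × C_j` with `u + v` a nonzero point of the null cone
`a*x^2 + b*y^2 = 0` equals `2(q-1)`. -/
theorem stmt11 (F : Type*) [Field F] [Fintype F]
    (q : ℕ) (hq : Fintype.card F = q) (hq1 : q % 4 = 1)
    (a b c : F) (ha : a ≠ 0) (hb : b ≠ 0) (hc : c ≠ 0) (habc : a * b = c ^ 2)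
    (i j : F) (hi : i ≠ 0) (hj : j ≠ 0) (hij : i ≠ j) :
    let C : F → Finset (F × F) := fun m =>
      Finset.univ.filter (fun p : F × F => a * p.1 ^ 2 + b * p.2 ^ 2 = m)
    (Finset.univ.filter (fun w : (F × F) × (F × F) =>
        w.1 ∈ C i ∧ w.2 ∈ C j ∧ w.1 + w.2 ≠ 0 ∧
        a * (w.1 + w.2).1 ^ 2 + b * (w.1 + w.2).2 ^ 2 = 0)).card
      = 2 * (q - 1) := by
  intro C
  have h2 : (2:F) ≠ 0 := by
    have hchar : ringChar F ≠ 2 := by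
      intro h
      have := FiniteField.even_card_of_char_two (F := F) h
      omega
    exact Ring.two_ne_zero hchar
  have hij' : i - j ≠ 0 := sub_ne_zero.mpr hij
  -- square root of -1
  obtain ⟨i₀, hi₀⟩ : IsSquare (-1 : F) := by
    rw [FiniteField.isSquare_neg_one_iff, hq]; omega
  have hi₀' : i₀ ≠ 0 := by
    intro h; simp [h] at hi₀
  obtain ⟨s, hsdef⟩ : ∃ s : F, s = i₀ * c / a := ⟨_, rfl⟩
  have hs : s ≠ 0 := by
    rw [hsdef]
    exact div_ne_zero (mul_ne_zero hi₀' hc) ha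
  have hsq : a * s^2 = -b := by
    rw [hsdef]
    field_simp
    linear_combination (-(c^2))*hi₀ + habc
  -- coordinates of nonzero null points are nonzero
  have hcoord : ∀ p : F × F, p ≠ 0 → a*p.1^2 + b*p.2^2 = 0 → p.1 ≠ 0 ∧ p.2 ≠ 0 := by
    rintro ⟨x, y⟩ hne heq
    constructor
    · rintro rfl
      have h4 : b * y^2 = 0 := by linear_combination heq
      have h5 : y^2 = 0 := by
        rcases mul_eq_zero.1 h4 with h | h
        · exact absurd h hb
        · exact h
      exact hne (by simp [sq_eq_zero_iff.mp h5])
    · rintro rfl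
      have h4 : a * x^2 = 0 := by linear_combination heq
      have h5 : x^2 = 0 := by
        rcases mul_eq_zero.1 h4 with h | h
        · exact absurd h ha
        · exact h
      exact hne (by simp [sq_eq_zero_iff.mp h5])
  have hbij : (Finset.univ.filter (fun w : (F × F) × (F × F) =>
        w.1 ∈ C i ∧ w.2 ∈ C j ∧ w.1 + w.2 ≠ 0 ∧
        a * (w.1 + w.2).1 ^ 2 + b * (w.1 + w.2).2 ^ 2 = 0)).card
      = (Finset.univ.filter (fun p : F × F => p ≠ 0 ∧ a*p.1^2 + b*p.2^2 = 0)).card := by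
    have hup : ∀ u p : F × F, u + (p - u) = p := fun u p => by abel
    refine Finset.card_bij' (fun w _ => w.1 + w.2)
      (fun p _ => ((((i-j)/(2*a*p.1) + ((i - (i-j)^2/(4*(a*p.1^2)))/(i-j))*p.1,
          ((i - (i-j)^2/(4*(a*p.1^2)))/(i-j))*p.2) : F × F),
        p - ((i-j)/(2*a*p.1) + ((i - (i-j)^2/(4*(a*p.1^2)))/(i-j))*p.1,
          ((i - (i-j)^2/(4*(a*p.1^2)))/(i-j))*p.2)))
      ?hmapi ?hmapj ?hleft ?hright
    case hmapi =>
      intro w hw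
      simp only [C, Finset.mem_filter, Finset.mem_univ, true_and] at hw ⊢
      exact ⟨hw.2.2.1, hw.2.2.2⟩
    case hmapj =>
      intro p hp
      simp only [Finset.mem_filter, Finset.mem_univ, true_and] at hp
      obtain ⟨hp0, hpnull⟩ := hp
      obtain ⟨hp1, hp2⟩ := hcoord p hp0 hpnull
      simp only [C, Finset.mem_filter, Finset.mem_univ, true_and]
      refine ⟨?_, ?_, ?_, ?_⟩
      · exact alg1 F a b i j p.1 p.2 ha hb h2 hij' hp1 hp2 hpnull
      · have := alg2 F a b i j p.1 p.2 ha hb h2 hij' hp1 hp2 hpnull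
        simpa using this
      · rw [hup]
        exact hp0
      · rw [hup]
        exact hpnull
    case hleft =>
      intro w hw
      simp only [C, Finset.mem_filter, Finset.mem_univ, true_and] at hw
      obtain ⟨hQ1, hQ2, hne, hnull⟩ := hw
      obtain ⟨hp1, hp2⟩ := hcoord _ hne hnull
      have hx2 : a*((w.1+w.2).1 - w.1.1)^2 + b*((w.1+w.2).2 - w.1.2)^2 = j := by
        simpa using hQ2
      have hy1 := alg1 F a b i j (w.1+w.2).1 (w.1+w.2).2 ha hb h2 hij' hp1 hp2 hnull
      have hy2 := alg2 F a b i j (w.1+w.2).1 (w.1+w.2).2 ha hb h2 hij' hp1 hp2 hnull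
      obtain ⟨e1, e2⟩ := alg_unique F a b i j (w.1+w.2).1 (w.1+w.2).2 w.1.1 w.1.2 _ _
        ha hb h2 hij' hp1 hp2 hnull hQ1 hx2 hy1 hy2
      have hu : ((i-j)/(2*a*(w.1+w.2).1) + ((i - (i-j)^2/(4*(a*(w.1+w.2).1^2)))/(i-j))*(w.1+w.2).1,
          ((i - (i-j)^2/(4*(a*(w.1+w.2).1^2)))/(i-j))*(w.1+w.2).2) = w.1 := by
        ext
        · exact e1.symm
        · exact e2.symm
      rw [hu]
      ext <;> simp
    case hright =>
      intro p hp
      dsimp only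
      rw [hup]
  rw [hbij, nullcone_card F a b s ha hb hs h2 hsq, hq]
end

section
/- Let q ≡ 3 (mod 4) be an odd prime power and define for i, j ∈ F_q* and k ∈ F_q the structure constants n_{ij}^k = 0, 1/(q+1), or 2/(q+1) according as f(i,j,k) = ij − (i−j−k)²/4 is a nonsquare, zero, or a nonzero square in F_q. Then for all i, j ∈ F_q*, the sum over k ∈ F_q of n_{ij}^k equals 1. -/
open scoped Classical

open Finset

lemma aux_sum_sq_sub {F : Type*} [Field F] [Fintype F] [DecidableEq F]
    (hF : ringChar F ≠ 2) (c : F) (hc : c ≠ 0) :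
    ∑ t : F, quadraticChar F (t ^ 2 - c) = -1 := by
  have hfib : ∑ t : F, quadraticChar F (t ^ 2 - c)
      = ∑ u : F, (quadraticChar F u + 1) * quadraticChar F (u - c) := by
    rw [← Fintype.sum_fiberwise (fun t : F => t ^ 2)
      (fun t : F => quadraticChar F (t ^ 2 - c))]
    refine Finset.sum_congr rfl fun u _ => ?_
    have : ∀ t : {t : F // t ^ 2 = u}, quadraticChar F (t.1 ^ 2 - c)
        = quadraticChar F (u - c) := fun t => by rw [t.2]
    rw [Finset.sum_congr rfl (fun t _ => this t), Finset.sum_const, nsmul_eq_mul]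
    congr 1
    have := quadraticChar_card_sqrts hF u
    rw [← this]
    norm_cast
    rw [Finset.card_univ, Set.toFinset_card]
    apply Fintype.card_congr
    exact Equiv.subtypeEquivRight (fun t => by simp)
  rw [hfib]
  have hsplit : ∀ u : F, (quadraticChar F u + 1) * quadraticChar F (u - c)
      = quadraticChar F (u * (u - c)) + quadraticChar F (u - c) := by
    intro u; rw [map_mul]; ring
  rw [Finset.sum_congr rfl (fun u _ => hsplit u), Finset.sum_add_distrib]
  have h2 : ∑ u : F, quadraticChar F (u - c) = 0 :=
    (Fintype.sum_equiv (Equiv.subRight c) _ (fun u => quadraticChar F u)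
      (fun u => rfl)).trans (quadraticChar_sum_zero hF)
  rw [h2, add_zero]
  -- ∑ u, χ (u * (u - c)) = -1
  have key : ∀ u : F, u ≠ 0 → quadraticChar F (u * (u - c))
      = quadraticChar F (1 - c * u⁻¹) := by
    intro u hu
    have : u * (u - c) = u ^ 2 * (1 - c * u⁻¹) := by field_simp
    rw [this, map_mul, quadraticChar_sq_one' hu, one_mul]
  rw [← Finset.sum_subset (Finset.subset_univ ({0}ᶜ : Finset F))
    (by intro x _ hx
        simp only [Finset.mem_compl, Finset.mem_singleton, not_not] at hx
        rw [hx, zero_mul, quadraticChar_zero])]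
  rw [Finset.sum_congr rfl (fun u hu => key u (by
    simpa using hu))]
  -- bijection u ↦ 1 - c * u⁻¹ from {0}ᶜ to {1}ᶜ
  have hbij : ∑ u ∈ ({0}ᶜ : Finset F), quadraticChar F (1 - c * u⁻¹)
      = ∑ v ∈ ({1}ᶜ : Finset F), quadraticChar F v := by
    refine Finset.sum_nbij' (fun u => 1 - c * u⁻¹) (fun v => c * (1 - v)⁻¹)
      ?_ ?_ ?_ ?_ ?_
    · intro u hu
      simp only [Finset.mem_compl, Finset.mem_singleton] at hu ⊢
      intro h
      apply hu
      have : c * u⁻¹ = 0 := by linear_combination -h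
      rcases mul_eq_zero.mp this with h' | h'
      · exact absurd h' hc
      · exact inv_eq_zero.mp h'
    · intro v hv
      simp only [Finset.mem_compl, Finset.mem_singleton] at hv ⊢
      intro h
      rcases mul_eq_zero.mp h with h' | h'
      · exact hc h'
      · exact hv (by
          have : (1 : F) - v = 0 := by
            by_contra h''
            exact (inv_ne_zero h'') h'
          linear_combination -this)
    · intro u hu
      simp only [Finset.mem_compl, Finset.mem_singleton] at hu
      show c * (1 - (1 - c * u⁻¹))⁻¹ = u
      have h1 : (1 : F) - (1 - c * u⁻¹) = c * u⁻¹ := by ring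
      rw [h1, mul_inv, inv_inv]
      field_simp
    · intro v hv
      simp only [Finset.mem_compl, Finset.mem_singleton] at hv
      have h1 : (1 : F) - v ≠ 0 := fun h => hv (by linear_combination -h)
      show 1 - c * (c * (1 - v)⁻¹)⁻¹ = v
      rw [mul_inv, inv_inv, ← mul_assoc, mul_inv_cancel₀ hc, one_mul]
      ring
    · intro u hu; rfl
  rw [hbij]
  have := quadraticChar_sum_zero hF
  have hsplit2 : ∑ v : F, quadraticChar F v
      = quadraticChar F 1 + ∑ v ∈ ({1}ᶜ : Finset F), quadraticChar F v := by
    rw [← Finset.sum_compl_add_sum ({1} : Finset F)]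
    simp [add_comm]
  rw [this] at hsplit2
  have h1 : quadraticChar F (1 : F) = 1 := by simp
  rw [h1] at hsplit2
  linarith

/-- For `q ≡ 3 (mod 4)`, the structure constants
`n_{ij}^k ∈ {0, 1/(q+1), 2/(q+1)}` (according as `f(i,j,k)` is a nonsquare,
zero, or a nonzero square) sum to `1` over `k ∈ F_q`, for all `i, j ≠ 0`. -/
theorem stmt12 (F : Type*) [Field F] [Fintype F]
    (q : ℕ) (hq : Fintype.card F = q) (hq3 : q % 4 = 3)
    (i j : F) (hi : i ≠ 0) (hj : j ≠ 0) :
    let n : F → ℚ := fun k =>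
      if ¬ IsSquare (i * j - (i - j - k) ^ 2 / 4) then 0
      else if i * j - (i - j - k) ^ 2 / 4 = 0 then 1 / (q + 1)
      else 2 / (q + 1)
    ∑ k : F, n k = 1 := by
  intro n
  have hF : ringChar F ≠ 2 := by
    intro h
    have := FiniteField.even_card_of_char_two h
    rw [hq] at this
    omega
  have h2 : (2 : F) ≠ 0 := Ring.two_ne_zero hF
  have hχ1 : quadraticChar F (-1) = -1 := by
    rw [quadraticChar_neg_one_iff_not_isSquare, FiniteField.isSquare_neg_one_iff, hq, hq3]
    simp
  set c : F := i * j with hcdef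
  have hc : c ≠ 0 := mul_ne_zero hi hj
  -- key character sum
  have hkey : ∑ k : F, quadraticChar F (i * j - (i - j - k) ^ 2 / 4) = 1 := by
    have hre : ∑ k : F, quadraticChar F (i * j - (i - j - k) ^ 2 / 4)
        = ∑ t : F, quadraticChar F (c - t ^ 2) := by
      have hbij : Function.Bijective (fun t : F => i - j - 2 * t) := by
        constructor
        · intro a b hab
          simp only at hab
          have : (2 : F) * a = 2 * b := by linear_combination -hab
          exact mul_left_cancel₀ h2 this
        · intro k
          exact ⟨(i - j - k) / 2, by field_simp; ring⟩
      rw [← Fintype.sum_bijective _ hbij _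
        (fun k => quadraticChar F (i * j - (i - j - k) ^ 2 / 4)) (fun t => rfl)]
      refine Finset.sum_congr rfl fun t _ => ?_
      have h4 : (4 : F) ≠ 0 := by
        have h42 : (4 : F) = 2 ^ 2 := by norm_num
        rw [h42]; exact pow_ne_zero _ h2
      show quadraticChar F (i * j - (i - j - (i - j - 2 * t)) ^ 2 / 4)
          = quadraticChar F (c - t ^ 2)
      congr 1
      have hstep : i - j - (i - j - 2 * t) = 2 * t := by ring
      rw [hstep, show (2 * t) ^ 2 = t ^ 2 * 4 by ring, mul_div_cancel_right₀ _ h4]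
    rw [hre]
    have : ∀ t : F, quadraticChar F (c - t ^ 2)
        = quadraticChar F (-1) * quadraticChar F (t ^ 2 - c) := by
      intro t
      rw [← map_mul]
      congr 1
      ring
    rw [Finset.sum_congr rfl (fun t _ => this t), ← Finset.mul_sum,
      aux_sum_sq_sub hF c hc, hχ1]
    ring
  -- pointwise: n k = (1 + χ (f k)) / (q + 1)
  have hq1 : ((q : ℚ) + 1) ≠ 0 := by positivity
  have hpt : ∀ k : F, n k
      = ((1 + quadraticChar F (i * j - (i - j - k) ^ 2 / 4) : ℤ) : ℚ) / (q + 1) := by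
    intro k
    set a : F := i * j - (i - j - k) ^ 2 / 4 with ha
    by_cases hs : IsSquare a
    · by_cases h0 : a = 0
      · simp only [n, hs, not_true, if_false, h0, if_true, ha]
        rw [← ha, h0, quadraticChar_zero]
        norm_num
      · simp only [n, hs, not_true, if_false, h0, if_false, ha]
        rw [← ha, (quadraticChar_one_iff_isSquare h0).mpr hs]
        norm_num
        simp [hs, h0]
    · simp only [n, hs, not_false_iff, if_true, ha]
      rw [← ha, quadraticChar_neg_one_iff_not_isSquare.mpr hs]
      norm_num
      simp [hs]
  rw [Finset.sum_congr rfl (fun k _ => hpt k), ← Finset.sum_div]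
  rw [div_eq_one_iff_eq hq1]
  push_cast
  rw [Finset.sum_add_distrib]
  have : ∑ k : F, ((quadraticChar F (i * j - (i - j - k) ^ 2 / 4) : ℤ) : ℚ)
      = ((∑ k : F, quadraticChar F (i * j - (i - j - k) ^ 2 / 4) : ℤ) : ℚ) := by
    push_cast; rfl
  rw [this, hkey]
  simp [Finset.card_univ, hq]
end

section
/- Let q ≡ 1 (mod 4) be an odd prime power with q ≥ 13, and let K be the Markov kernel on the state space F_q ∪ {q} (the extended hypergroup of conics, with the null circle split into {origin} and the punctured null cone) given by K(i,j) = n_{i1}^j. Let π be the distribution with π(0) = 1/q², π(q) = (2q−2)/q², and π(i) = (q−1)/q² for i ∈ F_q*. Then K⁶(i,j) ≥ (1/(3q))·π(j) for all states i, j. -/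
open scoped Classical
open Finset

noncomputable def conicsKernel1 (F : Type*) [Field F] [Fintype F] (q : ℕ) :
    Option F → Option F → ℚ
  | none, k => if k = some 1 then 0 else 1 / (q - 1)
  | some i, none =>
      if i = 0 then 0 else if i = 1 then 0 else 2 / (q - 1)
  | some i, some j =>
      if i = 0 then (if j = 1 then 1 else 0)
      else if j = 0 then (if i = 1 then 1 / (q - 1) else 0)
      else if ¬ IsSquare (i - (i - 1 - j) ^ 2 / 4) then 0
      else if i - (i - 1 - j) ^ 2 / 4 = 0 then 1 / (q - 1)
      else 2 / (q - 1)

section Aux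

variable {F : Type*} [Field F] [Fintype F] {q : ℕ}

/-- auxiliary weight function -/
noncomputable def wfun (q : ℕ) {F : Type*} [Field F] (x : F) : ℚ :=
  if ¬ IsSquare x then 0 else if x = 0 then 1 / ((q : ℚ) - 1) else 2 / ((q : ℚ) - 1)

lemma aux_two_ne_zero (hq : Fintype.card F = q) (hq1 : q % 4 = 1) : (2 : F) ≠ 0 := by
  refine Ring.two_ne_zero ?_
  intro hchar
  have := FiniteField.even_card_of_char_two (F := F) hchar
  rw [hq] at this
  omega

lemma aux_root_card (h2 : (2 : F) ≠ 0) (x : F) :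
    ((univ.filter (fun s : F => s ^ 2 = x)).card : ℚ)
      = if ¬ IsSquare x then 0 else if x = 0 then 1 else 2 := by
  by_cases hx : IsSquare x
  · by_cases hx0 : x = 0
    · subst hx0
      have h0 : (univ.filter (fun s : F => s ^ 2 = 0)) = {0} := by
        ext s; simp [pow_eq_zero_iff]
      rw [h0, card_singleton]
      simp
    · obtain ⟨r, hr⟩ := id hx
      have hr0 : r ≠ 0 := by rintro rfl; simp at hr; exact hx0 hr
      have hiff : ∀ s : F, s ^ 2 = x ↔ s = r ∨ s = -r := by
        intro s
        rw [hr, ← sub_eq_zero]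
        have : s ^ 2 - r * r = (s - r) * (s + r) := by ring
        rw [this, mul_eq_zero, sub_eq_zero, add_eq_zero_iff_eq_neg]
      have : (univ.filter (fun s : F => s ^ 2 = x)) = {r, -r} := by
        ext s; simp [hiff s]
      rw [this]
      have hne : r ≠ -r := by
        intro h
        apply hr0
        have h2r : (2 : F) * r = 0 := by rw [two_mul]; nth_rewrite 1 [h]; ring
        rcases mul_eq_zero.mp h2r with h' | h'
        · exact absurd h' h2
        · exact h'
      rw [card_insert_of_notMem (by simpa using hne), card_singleton]
      simp [hx, hx0]
  · have : (univ.filter (fun s : F => s ^ 2 = x)) = ∅ := by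
      ext s
      simp only [mem_filter, mem_univ, true_and, notMem_empty, iff_false]
      intro h
      exact hx ⟨s, by rw [← h, sq]⟩
    simp [this, hx]

lemma aux_pair_card_eq (c : F) :
    (univ.filter (fun p : F × F => p.1 ^ 2 + p.2 ^ 2 = c)).card
      = ∑ t : F, (univ.filter (fun s : F => s ^ 2 = c - t ^ 2)).card := by
  rw [Finset.card_eq_sum_card_fiberwise
    (f := Prod.snd) (t := univ) (fun x _ => mem_univ _)]
  refine Finset.sum_congr rfl fun t _ => ?_
  refine Finset.card_bij (fun p _ => p.1) ?_ ?_ ?_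
  · rintro ⟨s, t'⟩ hp
    simp only [mem_filter, mem_univ, true_and] at hp ⊢
    obtain ⟨h1, h2⟩ := hp
    subst h2
    linear_combination h1
  · rintro ⟨s, t'⟩ hp ⟨s', t''⟩ hp' h
    simp only [mem_filter, mem_univ, true_and] at hp hp'
    simp only at h
    simp [Prod.ext_iff, h, hp.2, hp'.2]
  · intro s hs
    simp only [mem_filter, mem_univ, true_and] at hs
    exact ⟨(s, t), by simp [hs], rfl⟩

lemma aux_pair_card_ge (hq : Fintype.card F = q) (h2 : (2 : F) ≠ 0)
    (hI : IsSquare (-1 : F)) (c : F) :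
    q - 1 ≤ (univ.filter (fun p : F × F => p.1 ^ 2 + p.2 ^ 2 = c)).card := by
  obtain ⟨I, hI⟩ := hI
  have hI2 : I * I = -1 := hI.symm
  have hIne : I ≠ 0 := by
    intro h; rw [h, mul_zero] at hI2; exact (by norm_num : (0:F) ≠ -1).elim (by simp [← hI2])
  have hcard : ((univ : Finset F) \ {0}).card = q - 1 := by
    rw [card_sdiff_of_subset (by simp), card_univ, hq]; simp
  rw [← hcard]
  refine Finset.card_le_card_of_injOn
    (fun u => ((u + c * u⁻¹) / 2, I * (c * u⁻¹ - u) / 2)) ?_ ?_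
  · intro u hu
    have hu0 : u ≠ 0 := by simpa using (mem_sdiff.mp hu).2
    simp only [mem_coe, mem_filter, mem_univ, true_and]
    field_simp
    ring_nf
    linear_combination (c - u ^ 2) ^ 2 * hI2
  · intro u hu v hv h
    have hu0 : u ≠ 0 := by simpa using (mem_sdiff.mp hu).2
    have hv0 : v ≠ 0 := by simpa using (mem_sdiff.mp hv).2
    have key : ∀ z : F, z ≠ 0 →
        ((z + c * z⁻¹) / 2) + I * (I * (c * z⁻¹ - z) / 2) = z := by
      intro z hz
      field_simp
      linear_combination (c - z ^ 2) * hI2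
    have h1 := congrArg Prod.fst h
    have h2' := congrArg Prod.snd h
    simp only at h1 h2'
    calc u = ((u + c * u⁻¹) / 2) + I * (I * (c * u⁻¹ - u) / 2) := (key u hu0).symm
    _ = ((v + c * v⁻¹) / 2) + I * (I * (c * v⁻¹ - v) / 2) := by rw [h1, h2']
    _ = v := key v hv0

end Aux

section Aux2

variable {F : Type*} [Field F] [Fintype F] {q : ℕ}

lemma aux_w_nonneg (hq13 : 13 ≤ q) (x : F) : 0 ≤ wfun q x := by
  have hq' : (13 : ℚ) ≤ (q : ℚ) := by exact_mod_cast hq13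
  unfold wfun
  split_ifs <;> first
    | exact le_rfl
    | exact div_nonneg (by norm_num) (by linarith)

lemma aux_w_le (hq13 : 13 ≤ q) (x : F) : wfun q x ≤ 2 / ((q : ℚ) - 1) := by
  have hq' : (13 : ℚ) ≤ (q : ℚ) := by exact_mod_cast hq13
  unfold wfun
  split_ifs <;> first
    | exact le_rfl
    | exact div_nonneg (by norm_num) (by linarith)
    | (rw [div_le_div_iff₀ (by linarith) (by linarith)]; linarith)

lemma aux_w_eq (hq13 : 13 ≤ q) (h2 : (2 : F) ≠ 0) (x : F) :
    wfun q x = ((univ.filter (fun s : F => s ^ 2 = x)).card : ℚ) * (1 / ((q : ℚ) - 1)) := by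
  rw [aux_root_card h2]
  unfold wfun
  split_ifs <;> ring

lemma aux_sum_univ (hq : Fintype.card F = q) (hq1 : q % 4 = 1) (hq13 : 13 ≤ q) (c : F) :
    ((q : ℚ) - 1) * (1 / ((q : ℚ) - 1)) ≤ ∑ t : F, wfun q (c - t ^ 2) := by
  have h2 := aux_two_ne_zero hq hq1
  have hI : IsSquare (-1 : F) := by
    rw [FiniteField.isSquare_neg_one_iff, hq]; omega
  have hq' : (13 : ℚ) ≤ (q : ℚ) := by exact_mod_cast hq13
  have heq : ∑ t : F, wfun q (c - t ^ 2)
      = ((univ.filter (fun p : F × F => p.1 ^ 2 + p.2 ^ 2 = c)).card : ℚ)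
          * (1 / ((q : ℚ) - 1)) := by
    rw [aux_pair_card_eq]
    push_cast
    rw [Finset.sum_mul]
    exact Finset.sum_congr rfl fun t _ => aux_w_eq hq13 h2 _
  rw [heq]
  have hN := aux_pair_card_ge hq h2 hI c
  have hN' : (q : ℚ) - 1 ≤ ((univ.filter (fun p : F × F => p.1 ^ 2 + p.2 ^ 2 = c)).card : ℚ) := by
    have h1 : ((q - 1 : ℕ) : ℚ) = (q : ℚ) - 1 := by
      have : 1 ≤ q := by omega
      push_cast [this]; ring
    rw [← h1]; exact_mod_cast hN
  have hE : 0 < 1 / ((q : ℚ) - 1) := one_div_pos.mpr (by linarith)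
  exact mul_le_mul_of_nonneg_right hN' (le_of_lt hE)

end Aux2

section Aux3

variable {F : Type*} [Field F] [Fintype F] {q : ℕ}

lemma aux_sum_subset (hq : Fintype.card F = q) (hq1 : q % 4 = 1) (hq13 : 13 ≤ q)
    (c : F) (S : Finset F) :
    (2 * (S.card : ℚ) - (q : ℚ) - 1) * (1 / ((q : ℚ) - 1))
      ≤ ∑ t ∈ S, wfun q (c - t ^ 2) := by
  have hq' : (13 : ℚ) ≤ (q : ℚ) := by exact_mod_cast hq13
  have h1 := aux_sum_univ hq hq1 hq13 c
  have hsplit : ∑ t ∈ (univ : Finset F) \ S, wfun q (c - t ^ 2)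
      + ∑ t ∈ S, wfun q (c - t ^ 2) = ∑ t : F, wfun q (c - t ^ 2) :=
    Finset.sum_sdiff (subset_univ S)
  have hcard : (((univ : Finset F) \ S).card : ℚ) = (q : ℚ) - (S.card : ℚ) := by
    rw [card_sdiff_of_subset (subset_univ S), card_univ, hq]
    have : S.card ≤ q := by rw [← hq, ← card_univ]; exact card_le_card (subset_univ S)
    push_cast [this]
    ring
  have h2 : ∑ t ∈ (univ : Finset F) \ S, wfun q (c - t ^ 2)
      ≤ (((univ : Finset F) \ S).card : ℚ) * (2 / ((q : ℚ) - 1)) := by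
    have := Finset.sum_le_card_nsmul ((univ : Finset F) \ S) (fun t => wfun q (c - t ^ 2))
      (2 / ((q : ℚ) - 1)) (fun t _ => aux_w_le hq13 _)
    simpa [nsmul_eq_mul] using this
  rw [hcard] at h2
  have hE : (0:ℚ) < (q : ℚ) - 1 := by linarith
  have hfrac : ((q : ℚ) - 1) * (1 / ((q : ℚ) - 1)) = 1 := by field_simp
  have h2' : ((q:ℚ) - (S.card:ℚ)) * (2 / ((q:ℚ) - 1))
      = (2 * ((q:ℚ) - (S.card:ℚ))) * (1 / ((q:ℚ) - 1)) := by ring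
  nlinarith [h1, h2, hsplit, one_div_pos.mpr hE]

lemma aux_S01_card (hq : Fintype.card F = q) :
    (((univ : Finset F) \ {0, 1}).card) = q - 2 := by
  rw [card_sdiff_of_subset (subset_univ _), card_univ, hq]
  rw [card_insert_of_notMem (by simp), card_singleton]

lemma aux_sum_affine (hq : Fintype.card F = q) (hq1 : q % 4 = 1) (hq13 : 13 ≤ q)
    (c d : F) :
    ((q : ℚ) - 5) * (1 / ((q : ℚ) - 1))
      ≤ ∑ z ∈ ((univ : Finset F) \ {0, 1}), wfun q (c - ((d - z) / 2) ^ 2) := by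
  have h2 := aux_two_ne_zero hq hq1
  have hinj : ∀ a ∈ ((univ : Finset F) \ {0, 1}), ∀ b ∈ ((univ : Finset F) \ {0, 1}),
      (d - a) / 2 = (d - b) / 2 → a = b := by
    intro a _ b _ h
    have h' : d - a = d - b := by
      have := congrArg (· * (2:F)) h
      simpa [div_mul_cancel₀, h2] using this
    exact sub_right_inj.mp h'
  have him := Finset.sum_image (g := fun z : F => (d - z) / 2)
    (f := fun t : F => wfun q (c - t ^ 2)) hinj
  rw [← him]
  have hcard : ((((univ : Finset F) \ {0, 1}).image fun z => (d - z) / 2).card : ℚ)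
      = (q : ℚ) - 2 := by
    rw [Finset.card_image_of_injOn fun a ha b hb h => hinj a ha b hb h, aux_S01_card hq]
    have : 2 ≤ q := by omega
    push_cast [this]
    ring
  have := aux_sum_subset hq hq1 hq13 c
    ((((univ : Finset F) \ {0, 1}).image fun z => (d - z) / 2))
  rw [hcard] at this
  calc ((q : ℚ) - 5) * (1 / ((q : ℚ) - 1))
      = (2 * ((q : ℚ) - 2) - (q : ℚ) - 1) * (1 / ((q : ℚ) - 1)) := by ring
  _ ≤ _ := this

lemma aux_K_eq_w (h2 : (2 : F) ≠ 0) {y z : F} (hy : y ≠ 0) (hz : z ≠ 0) :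
    conicsKernel1 F q (some y) (some z) = wfun q (y - (y - 1 - z) ^ 2 / 4) := by
  simp only [conicsKernel1, wfun, if_neg hy, if_neg hz]
  split_ifs <;> rfl

lemma aux_row (hq : Fintype.card F = q) (hq1 : q % 4 = 1) (hq13 : 13 ≤ q)
    {y : F} (hy : y ≠ 0) :
    ((q : ℚ) - 5) * (1 / ((q : ℚ) - 1))
      ≤ ∑ z ∈ ((univ : Finset F) \ {0, 1}), conicsKernel1 F q (some y) (some z) := by
  have h2 := aux_two_ne_zero hq hq1
  have h4 : (4 : F) ≠ 0 := by
    have : (4 : F) = 2 * 2 := by norm_num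
    rw [this]; exact mul_ne_zero h2 h2
  have he : ∀ z ∈ ((univ : Finset F) \ {0, 1}),
      conicsKernel1 F q (some y) (some z) = wfun q (y - ((y - 1 - z) / 2) ^ 2) := by
    intro z hz
    have hz0 : z ≠ 0 := by
      intro h; subst h; simp at hz
    rw [aux_K_eq_w h2 hy hz0]
    congr 1
    rw [div_pow]
    norm_num
  rw [Finset.sum_congr rfl he]
  exact aux_sum_affine hq hq1 hq13 y (y - 1)

lemma aux_col (hq : Fintype.card F = q) (hq1 : q % 4 = 1) (hq13 : 13 ≤ q)
    {z : F} (hz : z ≠ 0) :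
    ((q : ℚ) - 5) * (1 / ((q : ℚ) - 1))
      ≤ ∑ y ∈ ((univ : Finset F) \ {0, 1}), conicsKernel1 F q (some y) (some z) := by
  have h2 := aux_two_ne_zero hq hq1
  have h4 : (4 : F) ≠ 0 := by
    have : (4 : F) = 2 * 2 := by norm_num
    rw [this]; exact mul_ne_zero h2 h2
  have he : ∀ y ∈ ((univ : Finset F) \ {0, 1}),
      conicsKernel1 F q (some y) (some z) = wfun q ((z + 2) - ((z + 3 - y) / 2) ^ 2) := by
    intro y hy
    have hy0 : y ≠ 0 := by
      intro h; subst h; simp at hy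
    rw [aux_K_eq_w h2 hy0 hz]
    congr 1
    field_simp
    ring
  rw [Finset.sum_congr rfl he]
  exact aux_sum_affine hq hq1 hq13 (z + 2) (z + 3)

end Aux3

section Aux4

variable {F : Type*} [Field F] [Fintype F] {q : ℕ}

lemma aux_K_nonneg (hq13 : 13 ≤ q) (a b : Option F) : 0 ≤ conicsKernel1 F q a b := by
  have hq' : (13 : ℚ) ≤ (q : ℚ) := by exact_mod_cast hq13
  rcases a with _ | x <;> rcases b with _ | y <;>
    simp only [conicsKernel1] <;> split_ifs <;>
    first
      | exact le_rfl
      | exact div_nonneg (by norm_num) (by linarith)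
      | norm_num

lemma aux_K_none_some {z : F} (hz : z ≠ 1) :
    conicsKernel1 F q none (some z) = 1 / ((q : ℚ) - 1) := by
  simp only [conicsKernel1]
  rw [if_neg (by simpa using hz)]

lemma aux_K_none_none : conicsKernel1 F q none none = 1 / ((q : ℚ) - 1) := by
  simp only [conicsKernel1]
  rw [if_neg (by simp)]

lemma aux_K_some_none {y : F} (hy0 : y ≠ 0) (hy1 : y ≠ 1) :
    conicsKernel1 F q (some y) none = 2 / ((q : ℚ) - 1) := by
  simp only [conicsKernel1]
  rw [if_neg hy0, if_neg hy1]

lemma aux_K_zero_one : conicsKernel1 F q (some 0) (some 1) = 1 := by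
  simp only [conicsKernel1]
  simp

lemma aux_sum_option (f : Option F → ℚ) (h0 : ∀ a, 0 ≤ f a) (S : Finset F) :
    ∑ z ∈ S, f (some z) ≤ ∑ k : Option F, f k := by
  have hmap := Finset.sum_map S ⟨some, Option.some_injective F⟩ f
  simp only [Function.Embedding.coeFn_mk] at hmap
  rw [← hmap]
  exact Finset.sum_le_sum_of_subset_of_nonneg (subset_univ _) (fun k _ _ => h0 k)

lemma aux_sum_ge (S : Finset F) (f : Option F → ℚ) (h0 : ∀ a, 0 ≤ f a)
    (g : F → ℚ) (hg : ∀ z ∈ S, g z ≤ f (some z)) :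
    ∑ z ∈ S, g z ≤ ∑ k : Option F, f k :=
  le_trans (Finset.sum_le_sum hg) (aux_sum_option f h0 S)

end Aux4

section Aux5

lemma aux_num1 (x : ℚ) (hx : 13 ≤ x) :
    (1 / (3 * x)) * ((x - 1) / x ^ 2)
      ≤ (2 * (x - 5) ^ 2 * (1 / (x - 1)) ^ 3) * ((x - 5) ^ 2 * (1 / (x - 1)) ^ 3) := by
  have h1 : (0:ℚ) < x := by linarith
  have h2 : (0:ℚ) < x - 1 := by linarith
  have ht : (0:ℚ) ≤ x - 13 := by linarith
  have hx0 : x ≠ 0 := ne_of_gt h1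
  have hx1 : x - 1 ≠ 0 := ne_of_gt h2
  have key : (x - 1) ^ 7 ≤ 6 * x ^ 3 * (x - 5) ^ 4 := by
    nlinarith [pow_nonneg ht 2, pow_nonneg ht 3, pow_nonneg ht 4, pow_nonneg ht 5,
      pow_nonneg ht 6, pow_nonneg ht 7]
  have lhs : (1 / (3 * x)) * ((x - 1) / x ^ 2) = (x - 1) / (3 * x ^ 3) := by
    field_simp
    all_goals first | ring1 | (left; ring1) | (exact Or.inl trivial) | (ring_nf; exact Or.inl trivial)
  have rhs : (2 * (x - 5) ^ 2 * (1 / (x - 1)) ^ 3) * ((x - 5) ^ 2 * (1 / (x - 1)) ^ 3)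
      = (2 * (x - 5) ^ 4) / ((x - 1) ^ 6) := by
    field_simp
    all_goals first | ring1 | (left; ring1) | (exact Or.inl trivial) | (ring_nf; exact Or.inl trivial)
  rw [lhs, rhs, div_le_div_iff₀ (by positivity) (by positivity)]
  nlinarith [key]

lemma aux_num0 (x : ℚ) (hx : 13 ≤ x) :
    (1 / (3 * x)) * (1 / x ^ 2)
      ≤ (2 * (x - 5) ^ 2 * (1 / (x - 1)) ^ 3) * (2 * (x - 2) * (1 / (x - 1)) ^ 3) := by
  have h1 : (0:ℚ) < x := by linarith
  have h2 : (0:ℚ) < x - 1 := by linarith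
  have ht : (0:ℚ) ≤ x - 13 := by linarith
  have hx0 : x ≠ 0 := ne_of_gt h1
  have hx1 : x - 1 ≠ 0 := ne_of_gt h2
  have key : (x - 1) ^ 6 ≤ 12 * x ^ 3 * (x - 5) ^ 2 * (x - 2) := by
    nlinarith [pow_nonneg ht 2, pow_nonneg ht 3, pow_nonneg ht 4, pow_nonneg ht 5,
      pow_nonneg ht 6]
  have lhs : (1 / (3 * x)) * (1 / x ^ 2) = 1 / (3 * x ^ 3) := by
    field_simp
    all_goals first | ring1 | (left; ring1) | (exact Or.inl trivial) | (ring_nf; exact Or.inl trivial)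
  have rhs : (2 * (x - 5) ^ 2 * (1 / (x - 1)) ^ 3) * (2 * (x - 2) * (1 / (x - 1)) ^ 3)
      = (4 * (x - 5) ^ 2 * (x - 2)) / ((x - 1) ^ 6) := by
    field_simp
    all_goals first | ring1 | (left; ring1) | (exact Or.inl trivial) | (ring_nf; exact Or.inl trivial)
  rw [lhs, rhs, div_le_div_iff₀ (by positivity) (by positivity)]
  nlinarith [key]

lemma aux_numN (x : ℚ) (hx : 13 ≤ x) :
    (1 / (3 * x)) * ((2 * x - 2) / x ^ 2)
      ≤ (2 * (x - 5) ^ 2 * (1 / (x - 1)) ^ 3) * (2 * (x - 2) * (x - 5) * (1 / (x - 1)) ^ 3) := by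
  have h1 : (0:ℚ) < x := by linarith
  have h2 : (0:ℚ) < x - 1 := by linarith
  have ht : (0:ℚ) ≤ x - 13 := by linarith
  have hx0 : x ≠ 0 := ne_of_gt h1
  have hx1 : x - 1 ≠ 0 := ne_of_gt h2
  have key : (x - 1) ^ 7 ≤ 6 * x ^ 3 * (x - 5) ^ 3 * (x - 2) := by
    nlinarith [pow_nonneg ht 2, pow_nonneg ht 3, pow_nonneg ht 4, pow_nonneg ht 5,
      pow_nonneg ht 6, pow_nonneg ht 7]
  have lhs : (1 / (3 * x)) * ((2 * x - 2) / x ^ 2) = (2 * (x - 1)) / (3 * x ^ 3) := by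
    field_simp
    all_goals first | ring1 | (left; ring1) | (exact Or.inl trivial) | (ring_nf; exact Or.inl trivial)
  have rhs : (2 * (x - 5) ^ 2 * (1 / (x - 1)) ^ 3) * (2 * (x - 2) * (x - 5) * (1 / (x - 1)) ^ 3)
      = (4 * (x - 5) ^ 3 * (x - 2)) / ((x - 1) ^ 6) := by
    field_simp
    all_goals first | ring1 | (left; ring1) | (exact Or.inl trivial) | (ring_nf; exact Or.inl trivial)
  rw [lhs, rhs, div_le_div_iff₀ (by positivity) (by positivity)]
  nlinarith [key]

end Aux5

/-- For `q ≡ 1 (mod 4)`, `q ≥ 13`, the six-step transition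
probabilities of the random walk by `C_1` on the extended hypergroup of conics
satisfy `K⁶(i,j) ≥ (1/(3q))·π(j)`, where `π(0) = 1/q²`, `π(q) = (2q-2)/q²` and
`π(i) = (q-1)/q²` for `i ∈ F_q*`. -/
theorem stmt18 (F : Type*) [Field F] [Fintype F]
    (q : ℕ) (hq : Fintype.card F = q) (hq1 : q % 4 = 1) (hq13 : 13 ≤ q)
    (i j : Option F) :
    let K := conicsKernel1 F q
    let π : Option F → ℚ := fun m =>
      match m with
      | none => (2 * q - 2) / q ^ 2
      | some x => if x = 0 then 1 / q ^ 2 else (q - 1) / q ^ 2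
    (1 / (3 * (q : ℚ))) * π j ≤
      ∑ k₁ : Option F, ∑ k₂ : Option F, ∑ k₃ : Option F, ∑ k₄ : Option F,
        ∑ k₅ : Option F,
          K i k₁ * K k₁ k₂ * K k₂ k₃ * K k₃ k₄ * K k₄ k₅ * K k₅ j := by
  intro K π
  have hKdef : K = conicsKernel1 F q := rfl
  rw [hKdef]
  have hq' : (13 : ℚ) ≤ (q : ℚ) := by exact_mod_cast hq13
  have hE0 : (0:ℚ) < 1 / ((q:ℚ) - 1) := one_div_pos.mpr (by linarith)
  have hE0' : (0:ℚ) ≤ 1 / ((q:ℚ) - 1) := le_of_lt hE0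
  have h2E : (0:ℚ) ≤ 2 / ((q:ℚ) - 1) := div_nonneg (by norm_num) (by linarith)
  have h5 : (0:ℚ) ≤ (q:ℚ) - 5 := by linarith
  have hK0 : ∀ a b : Option F, 0 ≤ conicsKernel1 F q a b := aux_K_nonneg hq13
  set S01 : Finset F := (univ : Finset F) \ {0, 1} with hS01def
  have hmem : ∀ z ∈ S01, z ≠ 0 ∧ z ≠ 1 := by
    intro z hz
    rw [hS01def] at hz
    simp only [mem_sdiff, mem_univ, true_and, mem_insert, mem_singleton] at hz
    exact ⟨fun h => hz (Or.inl h), fun h => hz (Or.inr h)⟩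
  have hcard : ((S01.card : ℕ) : ℚ) = (q:ℚ) - 2 := by
    rw [hS01def, aux_S01_card hq]
    have h2q : 2 ≤ q := by omega
    rw [Nat.cast_sub h2q]
    norm_num
  -- two-step bound to `none`
  have hD : ∀ y : F, y ≠ 0 →
      2 * ((q:ℚ) - 5) * (1 / ((q:ℚ) - 1)) ^ 2
        ≤ ∑ k₂ : Option F,
            conicsKernel1 F q (some y) k₂ * conicsKernel1 F q k₂ none := by
    intro y hy
    calc 2 * ((q:ℚ) - 5) * (1 / ((q:ℚ) - 1)) ^ 2
        = (((q:ℚ) - 5) * (1 / ((q:ℚ) - 1))) * (2 / ((q:ℚ) - 1)) := by ring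
      _ ≤ (∑ z ∈ S01, conicsKernel1 F q (some y) (some z)) * (2 / ((q:ℚ) - 1)) :=
          mul_le_mul_of_nonneg_right (aux_row hq hq1 hq13 hy) h2E
      _ = ∑ z ∈ S01, conicsKernel1 F q (some y) (some z) * (2 / ((q:ℚ) - 1)) :=
          Finset.sum_mul _ _ _
      _ ≤ ∑ k₂ : Option F,
            conicsKernel1 F q (some y) k₂ * conicsKernel1 F q k₂ none := by
          refine aux_sum_ge S01 _ (fun a => mul_nonneg (hK0 _ _) (hK0 _ _)) _ ?_
          intro z hz
          exact le_of_eq (by rw [aux_K_some_none (hmem z hz).1 (hmem z hz).2])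
  have hDnonneg : ∀ k₁ : Option F,
      0 ≤ ∑ k₂ : Option F, conicsKernel1 F q k₁ k₂ * conicsKernel1 F q k₂ none :=
    fun k₁ => Finset.sum_nonneg fun k₂ _ => mul_nonneg (hK0 _ _) (hK0 _ _)
  have hb2 : (0:ℚ) ≤ 2 * ((q:ℚ) - 5) * (1 / ((q:ℚ) - 1)) ^ 2 :=
    mul_nonneg (mul_nonneg (by norm_num) h5) (pow_nonneg hE0' 2)
  -- three-step bound to `none`
  have hA : ∀ i' : Option F,
      2 * ((q:ℚ) - 5) ^ 2 * (1 / ((q:ℚ) - 1)) ^ 3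
        ≤ ∑ k₁ : Option F, ∑ k₂ : Option F,
            conicsKernel1 F q i' k₁ * conicsKernel1 F q k₁ k₂
              * conicsKernel1 F q k₂ none := by
    intro i'
    have hre : ∀ k₁ : Option F,
        ∑ k₂ : Option F, conicsKernel1 F q i' k₁ * conicsKernel1 F q k₁ k₂
            * conicsKernel1 F q k₂ none
          = conicsKernel1 F q i' k₁
              * ∑ k₂ : Option F, conicsKernel1 F q k₁ k₂ * conicsKernel1 F q k₂ none := by
      intro k₁
      rw [Finset.mul_sum]
      exact Finset.sum_congr rfl fun k₂ _ => by ring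
    rw [Finset.sum_congr rfl fun k₁ _ => hre k₁]
    rcases i' with _ | x
    · have h6 : (0:ℚ) ≤ 6 * ((q:ℚ) - 5) * (1 / ((q:ℚ) - 1)) ^ 3 :=
        mul_nonneg (mul_nonneg (by norm_num) h5) (pow_nonneg hE0' 3)
      calc 2 * ((q:ℚ) - 5) ^ 2 * (1 / ((q:ℚ) - 1)) ^ 3
          ≤ ∑ z ∈ S01,
              (1 / ((q:ℚ) - 1)) * (2 * ((q:ℚ) - 5) * (1 / ((q:ℚ) - 1)) ^ 2) := by
            rw [Finset.sum_const, nsmul_eq_mul, hcard]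
            nlinarith [h6]
        _ ≤ ∑ k₁ : Option F, conicsKernel1 F q none k₁
              * ∑ k₂ : Option F, conicsKernel1 F q k₁ k₂ * conicsKernel1 F q k₂ none := by
            refine aux_sum_ge S01 _ (fun a => mul_nonneg (hK0 _ _) (hDnonneg a)) _ ?_
            intro z hz
            rw [aux_K_none_some (hmem z hz).2]
            exact mul_le_mul_of_nonneg_left (hD z (hmem z hz).1) hE0'
    · by_cases hx : x = 0
      · subst hx
        have hle1 : ((q:ℚ) - 5) * (1 / ((q:ℚ) - 1)) ≤ 1 := by
          rw [mul_one_div, div_le_one (by linarith)]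
          linarith
        calc 2 * ((q:ℚ) - 5) ^ 2 * (1 / ((q:ℚ) - 1)) ^ 3
            ≤ 2 * ((q:ℚ) - 5) * (1 / ((q:ℚ) - 1)) ^ 2 := by
              nlinarith [mul_le_mul_of_nonneg_left hle1 hb2]
          _ ≤ conicsKernel1 F q (some 0) (some 1)
                * ∑ k₂ : Option F, conicsKernel1 F q (some 1) k₂
                    * conicsKernel1 F q k₂ none := by
              rw [aux_K_zero_one, one_mul]
              exact hD 1 one_ne_zero
          _ ≤ ∑ k₁ : Option F, conicsKernel1 F q (some 0) k₁
                * ∑ k₂ : Option F, conicsKernel1 F q k₁ k₂ * conicsKernel1 F q k₂ none :=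
              Finset.single_le_sum
                (f := fun k₁ => conicsKernel1 F q (some 0) k₁
                  * ∑ k₂ : Option F, conicsKernel1 F q k₁ k₂ * conicsKernel1 F q k₂ none)
                (fun k₁ _ => mul_nonneg (hK0 _ _) (hDnonneg k₁)) (mem_univ (some 1))
      · calc 2 * ((q:ℚ) - 5) ^ 2 * (1 / ((q:ℚ) - 1)) ^ 3
            = (((q:ℚ) - 5) * (1 / ((q:ℚ) - 1)))
                * (2 * ((q:ℚ) - 5) * (1 / ((q:ℚ) - 1)) ^ 2) := by ring
          _ ≤ (∑ z ∈ S01, conicsKernel1 F q (some x) (some z))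
                * (2 * ((q:ℚ) - 5) * (1 / ((q:ℚ) - 1)) ^ 2) :=
              mul_le_mul_of_nonneg_right (aux_row hq hq1 hq13 hx) hb2
          _ = ∑ z ∈ S01, conicsKernel1 F q (some x) (some z)
                * (2 * ((q:ℚ) - 5) * (1 / ((q:ℚ) - 1)) ^ 2) := Finset.sum_mul _ _ _
          _ ≤ ∑ k₁ : Option F, conicsKernel1 F q (some x) k₁
                * ∑ k₂ : Option F, conicsKernel1 F q k₁ k₂ * conicsKernel1 F q k₂ none := by
              refine aux_sum_ge S01 _ (fun a => mul_nonneg (hK0 _ _) (hDnonneg a)) _ ?_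
              intro z hz
              exact mul_le_mul_of_nonneg_left (hD z (hmem z hz).1) (hK0 _ _)
  -- nonnegativity of the tail sums
  have hCnonneg : ∀ k₃ : Option F,
      0 ≤ ∑ k₄ : Option F, ∑ k₅ : Option F,
          conicsKernel1 F q k₃ k₄ * conicsKernel1 F q k₄ k₅ * conicsKernel1 F q k₅ j :=
    fun k₃ => Finset.sum_nonneg fun k₄ _ => Finset.sum_nonneg fun k₅ _ =>
      mul_nonneg (mul_nonneg (hK0 _ _) (hK0 _ _)) (hK0 _ _)
  -- the main splitting
  have hmain :
      (∑ k₁ : Option F, ∑ k₂ : Option F,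
          conicsKernel1 F q i k₁ * conicsKernel1 F q k₁ k₂ * conicsKernel1 F q k₂ none)
        * (∑ k₄ : Option F, ∑ k₅ : Option F,
            conicsKernel1 F q none k₄ * conicsKernel1 F q k₄ k₅ * conicsKernel1 F q k₅ j)
      ≤ ∑ k₁ : Option F, ∑ k₂ : Option F, ∑ k₃ : Option F, ∑ k₄ : Option F,
          ∑ k₅ : Option F,
            conicsKernel1 F q i k₁ * conicsKernel1 F q k₁ k₂ * conicsKernel1 F q k₂ k₃
              * conicsKernel1 F q k₃ k₄ * conicsKernel1 F q k₄ k₅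
              * conicsKernel1 F q k₅ j := by
    have hexp : ∀ k₁ k₂ : Option F,
        ∑ k₃ : Option F,
            (conicsKernel1 F q i k₁ * conicsKernel1 F q k₁ k₂ * conicsKernel1 F q k₂ k₃)
              * (∑ k₄ : Option F, ∑ k₅ : Option F,
                  conicsKernel1 F q k₃ k₄ * conicsKernel1 F q k₄ k₅
                    * conicsKernel1 F q k₅ j)
          = ∑ k₃ : Option F, ∑ k₄ : Option F, ∑ k₅ : Option F,
              conicsKernel1 F q i k₁ * conicsKernel1 F q k₁ k₂ * conicsKernel1 F q k₂ k₃
                * conicsKernel1 F q k₃ k₄ * conicsKernel1 F q k₄ k₅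
                * conicsKernel1 F q k₅ j := by
      intro k₁ k₂
      refine Finset.sum_congr rfl fun k₃ _ => ?_
      rw [Finset.mul_sum]
      refine Finset.sum_congr rfl fun k₄ _ => ?_
      rw [Finset.mul_sum]
      exact Finset.sum_congr rfl fun k₅ _ => by ring
    calc (∑ k₁ : Option F, ∑ k₂ : Option F,
            conicsKernel1 F q i k₁ * conicsKernel1 F q k₁ k₂ * conicsKernel1 F q k₂ none)
          * (∑ k₄ : Option F, ∑ k₅ : Option F,
              conicsKernel1 F q none k₄ * conicsKernel1 F q k₄ k₅ * conicsKernel1 F q k₅ j)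
        = ∑ k₁ : Option F, ∑ k₂ : Option F,
            (conicsKernel1 F q i k₁ * conicsKernel1 F q k₁ k₂ * conicsKernel1 F q k₂ none)
              * (∑ k₄ : Option F, ∑ k₅ : Option F,
                  conicsKernel1 F q none k₄ * conicsKernel1 F q k₄ k₅
                    * conicsKernel1 F q k₅ j) := by
          rw [Finset.sum_mul]
          exact Finset.sum_congr rfl fun k₁ _ => Finset.sum_mul _ _ _
      _ ≤ ∑ k₁ : Option F, ∑ k₂ : Option F, ∑ k₃ : Option F,
            (conicsKernel1 F q i k₁ * conicsKernel1 F q k₁ k₂ * conicsKernel1 F q k₂ k₃)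
              * (∑ k₄ : Option F, ∑ k₅ : Option F,
                  conicsKernel1 F q k₃ k₄ * conicsKernel1 F q k₄ k₅
                    * conicsKernel1 F q k₅ j) := by
          refine Finset.sum_le_sum fun k₁ _ => Finset.sum_le_sum fun k₂ _ => ?_
          exact Finset.single_le_sum
            (f := fun k₃ =>
              (conicsKernel1 F q i k₁ * conicsKernel1 F q k₁ k₂ * conicsKernel1 F q k₂ k₃)
                * (∑ k₄ : Option F, ∑ k₅ : Option F,
                    conicsKernel1 F q k₃ k₄ * conicsKernel1 F q k₄ k₅
                      * conicsKernel1 F q k₅ j))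
            (fun k₃ _ => mul_nonneg
              (mul_nonneg (mul_nonneg (hK0 _ _) (hK0 _ _)) (hK0 _ _)) (hCnonneg k₃))
            (mem_univ none)
      _ = _ := Finset.sum_congr rfl fun k₁ _ => Finset.sum_congr rfl fun k₂ _ => hexp k₁ k₂
  -- bounds on the two-step sums from `none`
  have hG : ∀ z : F, z ≠ 0 →
      ((q:ℚ) - 5) * (1 / ((q:ℚ) - 1)) ^ 2
        ≤ ∑ k₄ : Option F, conicsKernel1 F q none k₄ * conicsKernel1 F q k₄ (some z) := by
    intro z hz
    calc ((q:ℚ) - 5) * (1 / ((q:ℚ) - 1)) ^ 2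
        = (1 / ((q:ℚ) - 1)) * (((q:ℚ) - 5) * (1 / ((q:ℚ) - 1))) := by ring
      _ ≤ (1 / ((q:ℚ) - 1)) * ∑ y ∈ S01, conicsKernel1 F q (some y) (some z) :=
          mul_le_mul_of_nonneg_left (aux_col hq hq1 hq13 hz) hE0'
      _ = ∑ y ∈ S01, (1 / ((q:ℚ) - 1)) * conicsKernel1 F q (some y) (some z) :=
          Finset.mul_sum _ _ _
      _ ≤ ∑ k₄ : Option F, conicsKernel1 F q none k₄ * conicsKernel1 F q k₄ (some z) := by
          refine aux_sum_ge S01 _ (fun a => mul_nonneg (hK0 _ _) (hK0 _ _)) _ ?_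
          intro y hy
          exact le_of_eq (by rw [aux_K_none_some (hmem y hy).2])
  have hGnone : 2 * ((q:ℚ) - 2) * (1 / ((q:ℚ) - 1)) ^ 2
      ≤ ∑ k₄ : Option F, conicsKernel1 F q none k₄ * conicsKernel1 F q k₄ none := by
    calc 2 * ((q:ℚ) - 2) * (1 / ((q:ℚ) - 1)) ^ 2
        = ∑ y ∈ S01, (1 / ((q:ℚ) - 1)) * (2 / ((q:ℚ) - 1)) := by
          rw [Finset.sum_const, nsmul_eq_mul, hcard]; ring
      _ ≤ ∑ k₄ : Option F, conicsKernel1 F q none k₄ * conicsKernel1 F q k₄ none := by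
          refine aux_sum_ge S01 _ (fun a => mul_nonneg (hK0 _ _) (hK0 _ _)) _ ?_
          intro y hy
          exact le_of_eq (by
            rw [aux_K_none_some (hmem y hy).2,
              aux_K_some_none (hmem y hy).1 (hmem y hy).2])
  have hGnonneg : ∀ k₅ : Option F,
      0 ≤ ∑ k₄ : Option F, conicsKernel1 F q none k₄ * conicsKernel1 F q k₄ k₅ :=
    fun k₅ => Finset.sum_nonneg fun k₄ _ => mul_nonneg (hK0 _ _) (hK0 _ _)
  have hCre : (∑ k₄ : Option F, ∑ k₅ : Option F,
        conicsKernel1 F q none k₄ * conicsKernel1 F q k₄ k₅ * conicsKernel1 F q k₅ j)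
      = ∑ k₅ : Option F,
          (∑ k₄ : Option F, conicsKernel1 F q none k₄ * conicsKernel1 F q k₄ k₅)
            * conicsKernel1 F q k₅ j := by
    rw [Finset.sum_comm]
    exact Finset.sum_congr rfl fun k₅ _ => (Finset.sum_mul _ _ _).symm
  have hAnonneg : 0 ≤ ∑ k₁ : Option F, ∑ k₂ : Option F,
      conicsKernel1 F q i k₁ * conicsKernel1 F q k₁ k₂ * conicsKernel1 F q k₂ none :=
    Finset.sum_nonneg fun k₁ _ => Finset.sum_nonneg fun k₂ _ =>
      mul_nonneg (mul_nonneg (hK0 _ _) (hK0 _ _)) (hK0 _ _)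
  -- case split on `j`
  rcases j with _ | u
  · -- j = none
    have hπ : π none = (2 * (q:ℚ) - 2) / (q:ℚ) ^ 2 := rfl
    rw [hπ]
    have hC : 2 * ((q:ℚ) - 2) * ((q:ℚ) - 5) * (1 / ((q:ℚ) - 1)) ^ 3
        ≤ ∑ k₄ : Option F, ∑ k₅ : Option F,
            conicsKernel1 F q none k₄ * conicsKernel1 F q k₄ k₅
              * conicsKernel1 F q k₅ none := by
      rw [hCre]
      calc 2 * ((q:ℚ) - 2) * ((q:ℚ) - 5) * (1 / ((q:ℚ) - 1)) ^ 3
          = ∑ y ∈ S01,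
              ((q:ℚ) - 5) * (1 / ((q:ℚ) - 1)) ^ 2 * (2 / ((q:ℚ) - 1)) := by
            rw [Finset.sum_const, nsmul_eq_mul, hcard]; ring
        _ ≤ ∑ k₅ : Option F,
              (∑ k₄ : Option F, conicsKernel1 F q none k₄ * conicsKernel1 F q k₄ k₅)
                * conicsKernel1 F q k₅ none := by
            refine aux_sum_ge S01 _ (fun a => mul_nonneg (hGnonneg a) (hK0 _ _)) _ ?_
            intro y hy
            rw [aux_K_some_none (hmem y hy).1 (hmem y hy).2]
            exact mul_le_mul_of_nonneg_right (hG y (hmem y hy).1) h2E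
    refine le_trans (aux_numN (q:ℚ) hq') (le_trans ?_ hmain)
    refine mul_le_mul (hA i) hC ?_ hAnonneg
    have h22 : (0:ℚ) ≤ (q:ℚ) - 2 := by linarith
    exact mul_nonneg (mul_nonneg (mul_nonneg (by norm_num) h22) h5) (pow_nonneg hE0' 3)
  · by_cases hu : u = 0
    · subst hu
      have hπ : π (some (0:F)) = 1 / (q:ℚ) ^ 2 := by
        show (if (0:F) = 0 then (1:ℚ) / (q:ℚ) ^ 2 else ((q:ℚ) - 1) / (q:ℚ) ^ 2)
          = 1 / (q:ℚ) ^ 2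
        rw [if_pos rfl]
      rw [hπ]
      have hC : 2 * ((q:ℚ) - 2) * (1 / ((q:ℚ) - 1)) ^ 3
          ≤ ∑ k₄ : Option F, ∑ k₅ : Option F,
              conicsKernel1 F q none k₄ * conicsKernel1 F q k₄ k₅
                * conicsKernel1 F q k₅ (some 0) := by
        rw [hCre]
        calc 2 * ((q:ℚ) - 2) * (1 / ((q:ℚ) - 1)) ^ 3
            = (2 * ((q:ℚ) - 2) * (1 / ((q:ℚ) - 1)) ^ 2) * (1 / ((q:ℚ) - 1)) := by ring
          _ ≤ (∑ k₄ : Option F, conicsKernel1 F q none k₄ * conicsKernel1 F q k₄ none)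
                * (1 / ((q:ℚ) - 1)) := mul_le_mul_of_nonneg_right hGnone hE0'
          _ = (∑ k₄ : Option F, conicsKernel1 F q none k₄ * conicsKernel1 F q k₄ none)
                * conicsKernel1 F q none (some 0) := by
              rw [aux_K_none_some (zero_ne_one (α := F))]
          _ ≤ ∑ k₅ : Option F,
                (∑ k₄ : Option F, conicsKernel1 F q none k₄ * conicsKernel1 F q k₄ k₅)
                  * conicsKernel1 F q k₅ (some 0) :=
              Finset.single_le_sum
                (f := fun k₅ =>
                  (∑ k₄ : Option F, conicsKernel1 F q none k₄ * conicsKernel1 F q k₄ k₅)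
                    * conicsKernel1 F q k₅ (some 0))
                (fun k₅ _ => mul_nonneg (hGnonneg k₅) (hK0 _ _)) (mem_univ none)
      refine le_trans (aux_num0 (q:ℚ) hq') (le_trans ?_ hmain)
      have hc0 : (0:ℚ) ≤ 2 * ((q:ℚ) - 2) * (1 / ((q:ℚ) - 1)) ^ 3 := by
        have h22 : (0:ℚ) ≤ (q:ℚ) - 2 := by linarith
        exact mul_nonneg (mul_nonneg (by norm_num) h22) (pow_nonneg hE0' 3)
      exact mul_le_mul (hA i) hC hc0 hAnonneg
    · have hπ : π (some u) = ((q:ℚ) - 1) / (q:ℚ) ^ 2 := by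
        show (if u = 0 then (1:ℚ) / (q:ℚ) ^ 2 else ((q:ℚ) - 1) / (q:ℚ) ^ 2)
          = ((q:ℚ) - 1) / (q:ℚ) ^ 2
        rw [if_neg hu]
      rw [hπ]
      have hC : ((q:ℚ) - 5) ^ 2 * (1 / ((q:ℚ) - 1)) ^ 3
          ≤ ∑ k₄ : Option F, ∑ k₅ : Option F,
              conicsKernel1 F q none k₄ * conicsKernel1 F q k₄ k₅
                * conicsKernel1 F q k₅ (some u) := by
        rw [hCre]
        have hb5 : (0:ℚ) ≤ ((q:ℚ) - 5) * (1 / ((q:ℚ) - 1)) ^ 2 :=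
          mul_nonneg h5 (pow_nonneg hE0' 2)
        calc ((q:ℚ) - 5) ^ 2 * (1 / ((q:ℚ) - 1)) ^ 3
            = (((q:ℚ) - 5) * (1 / ((q:ℚ) - 1)) ^ 2)
                * (((q:ℚ) - 5) * (1 / ((q:ℚ) - 1))) := by ring
          _ ≤ (((q:ℚ) - 5) * (1 / ((q:ℚ) - 1)) ^ 2)
                * ∑ y ∈ S01, conicsKernel1 F q (some y) (some u) :=
              mul_le_mul_of_nonneg_left (aux_col hq hq1 hq13 hu) hb5
          _ = ∑ y ∈ S01, (((q:ℚ) - 5) * (1 / ((q:ℚ) - 1)) ^ 2)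
                * conicsKernel1 F q (some y) (some u) := Finset.mul_sum _ _ _
          _ ≤ ∑ k₅ : Option F,
                (∑ k₄ : Option F, conicsKernel1 F q none k₄ * conicsKernel1 F q k₄ k₅)
                  * conicsKernel1 F q k₅ (some u) := by
              refine aux_sum_ge S01 _ (fun a => mul_nonneg (hGnonneg a) (hK0 _ _)) _ ?_
              intro y hy
              exact mul_le_mul_of_nonneg_right (hG y (hmem y hy).1) (hK0 _ _)
      refine le_trans (aux_num1 (q:ℚ) hq') (le_trans ?_ hmain)
      have hc0 : (0:ℚ) ≤ ((q:ℚ) - 5) ^ 2 * (1 / ((q:ℚ) - 1)) ^ 3 :=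
        mul_nonneg (pow_nonneg h5 2) (pow_nonneg hE0' 3)
      exact mul_le_mul (hA i) hC hc0 hAnonneg
end

section
/- Let q ≡ 1 (mod 4) be an odd prime power, a, b, c ∈ F_q* with ab = c². For i ∈ F_q* and any point P with aP_x² + bP_y² = i, the number of points S with aS_x² + bS_y² = 1 such that P + S lies on the punctured null cone {(x,y) ≠ (0,0) : ax² + by² = 0} is exactly 2 when i ≠ 1, and 0 when i = 1. -/
open scoped Classical

/-- For `q ≡ 1 (mod 4)`, `i ≠ 0`, and a point `P` on the weighted
circle `C_i`, the number of points `S` on `C_1` with `P + S` on the punctured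
null cone is `2` when `i ≠ 1` and `0` when `i = 1`. -/
theorem stmt19 (F : Type*) [Field F] [Fintype F]
    (q : ℕ) (hq : Fintype.card F = q) (hq1 : q % 4 = 1)
    (a b c : F) (ha : a ≠ 0) (hb : b ≠ 0) (hc : c ≠ 0) (habc : a * b = c ^ 2)
    (i : F) (hi : i ≠ 0) (P : F × F) (hP : a * P.1 ^ 2 + b * P.2 ^ 2 = i) :
    (Finset.univ.filter (fun S : F × F =>
        a * S.1 ^ 2 + b * S.2 ^ 2 = 1 ∧ P + S ≠ 0 ∧
        a * (P + S).1 ^ 2 + b * (P + S).2 ^ 2 = 0)).card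
      = if i = 1 then 0 else 2 := by
  have hchar2 : ringChar F ≠ 2 := by
    intro h
    have hev := (FiniteField.even_card_iff_char_two).1 h
    rw [hq] at hev
    omega
  have h2 : (2:F) ≠ 0 := Ring.two_ne_zero hchar2
  obtain ⟨e, he⟩ : IsSquare (-1 : F) := by
    rw [FiniteField.isSquare_neg_one_iff, hq, hq1]
    omega
  have he0 : e ≠ 0 := by
    intro h
    rw [h, mul_zero] at he
    exact one_ne_zero (neg_eq_zero.1 he)
  set d : F := c / a with hd_def
  have hd : d ≠ 0 := div_ne_zero hc ha
  have had : a * d ^ 2 = b := by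
    rw [hd_def, div_pow, ← habc, mul_div_assoc', div_eq_iff (pow_ne_zero 2 ha)]
    ring
  have key : ∀ x y : F, a * x ^ 2 + b * y ^ 2 = a * ((x + e*d*y) * (x - e*d*y)) := by
    intro x y
    linear_combination (-y^2) * had + (-(a*d^2*y^2)) * he
  set p : F := P.1 + e*d*P.2 with hp_def
  set r : F := P.1 - e*d*P.2 with hr_def
  have hpr : a * (p * r) = i := by rw [← hP, key P.1 P.2]
  have hp : p ≠ 0 := by
    intro h; apply hi; rw [← hpr, h]; ring
  have hr : r ≠ 0 := by
    intro h; apply hi; rw [← hpr, h]; ring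
  have hap : a * p ≠ 0 := mul_ne_zero ha hp
  have har : a * r ≠ 0 := mul_ne_zero ha hr
  have hed : e * d ≠ 0 := mul_ne_zero he0 hd
  have hrec : ∀ S : F × F, S.1 = ((S.1 + e*d*S.2) + (S.1 - e*d*S.2))/2 ∧
      S.2 = ((S.1 + e*d*S.2) - (S.1 - e*d*S.2))/(2*(e*d)) := by
    intro S
    constructor
    · field_simp; ring
    · field_simp; ring
  have huv : ∀ S : F × F, ((P+S).1 + e*d*(P+S).2 = p + (S.1 + e*d*S.2)) ∧
      ((P+S).1 - e*d*(P+S).2 = r + (S.1 - e*d*S.2)) := by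
    intro S
    constructor
    · simp [hp_def, Prod.fst_add, Prod.snd_add]; ring
    · simp [hr_def, Prod.fst_add, Prod.snd_add]; ring
  by_cases hi1 : i = 1
  · rw [if_pos hi1]
    rw [Finset.card_eq_zero, Finset.filter_eq_empty_iff]
    rintro S - ⟨h1, hne, h3⟩
    rw [key] at h1 h3
    have h3' : ((P+S).1 + e*d*(P+S).2) * ((P+S).1 - e*d*(P+S).2) = 0 :=
      (mul_eq_zero.1 h3).resolve_left ha
    obtain ⟨hu, hv⟩ := huv S
    rw [hu, hv] at h3'
    set s : F := S.1 + e*d*S.2 with hs_def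
    set t : F := S.1 - e*d*S.2 with ht_def
    rw [hi1] at hpr
    have hboth : p + s = 0 ∧ r + t = 0 := by
      rcases mul_eq_zero.1 h3' with h | h
      · have hs : s = -p := by linear_combination h
        have h4 : a*p*(t + r) = 0 := by linear_combination -h1 + hpr + (a*t)*hs
        have h5 : t + r = 0 := (mul_eq_zero.1 h4).resolve_left hap
        exact ⟨h, by linear_combination h5⟩
      · have ht : t = -r := by linear_combination h
        have h4 : a*r*(s + p) = 0 := by linear_combination -h1 + hpr + (a*s)*ht
        have h5 : s + p = 0 := (mul_eq_zero.1 h4).resolve_left har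
        exact ⟨by linear_combination h5, h⟩
    apply hne
    obtain ⟨hx, hy⟩ := hrec (P+S)
    rw [hu, hv, hboth.1, hboth.2] at hx hy
    rw [Prod.ext_iff]
    constructor
    · simpa using hx
    · simpa using hy
  · rw [if_neg hi1]
    set S₁ : F × F := (-(p + r/i)/2, (r/i - p)/(2*(e*d))) with hS1_def
    set S₂ : F × F := (-(p/i + r)/2, (r - p/i)/(2*(e*d))) with hS2_def
    have hS1s : S₁.1 + e*d*S₁.2 = -p := by
      simp only [hS1_def]; field_simp; ring
    have hS1t : S₁.1 - e*d*S₁.2 = -(r/i) := by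
      simp only [hS1_def]; field_simp; ring
    have hS2s : S₂.1 + e*d*S₂.2 = -(p/i) := by
      simp only [hS2_def]; field_simp; ring
    have hS2t : S₂.1 - e*d*S₂.2 = -r := by
      simp only [hS2_def]; field_simp; ring
    have hS1S2 : S₁ ≠ S₂ := by
      intro h
      have hcomp : S₁.1 + e*d*S₁.2 = S₂.1 + e*d*S₂.2 := by rw [h]
      rw [hS1s, hS2s] at hcomp
      apply hi1
      field_simp at hcomp
      exact neg_inj.1 hcomp
    have hset : (Finset.univ.filter (fun S : F × F =>
        a * S.1 ^ 2 + b * S.2 ^ 2 = 1 ∧ P + S ≠ 0 ∧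
        a * (P + S).1 ^ 2 + b * (P + S).2 ^ 2 = 0)) = {S₁, S₂} := by
      ext S
      simp only [Finset.mem_filter, Finset.mem_univ, true_and, Finset.mem_insert,
        Finset.mem_singleton]
      constructor
      · rintro ⟨h1, hne, h3⟩
        rw [key] at h1 h3
        have h3' : ((P+S).1 + e*d*(P+S).2) * ((P+S).1 - e*d*(P+S).2) = 0 :=
          (mul_eq_zero.1 h3).resolve_left ha
        obtain ⟨hu, hv⟩ := huv S
        rw [hu, hv] at h3'
        set s : F := S.1 + e*d*S.2 with hs_def
        set t : F := S.1 - e*d*S.2 with ht_def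
        have hx : S.1 = (s + t)/2 := (hrec S).1
        have hy : S.2 = (s - t)/(2*(e*d)) := (hrec S).2
        rcases mul_eq_zero.1 h3' with h | h
        · left
          have hs : s = -p := by linear_combination h
          have h4 : (a*p)*(i*t + r) = 0 := by
            linear_combination (-i)*h1 + hpr + (a*i*t)*hs
          have h5 : i*t + r = 0 := (mul_eq_zero.1 h4).resolve_left hap
          have ht : t = -(r/i) := by
            field_simp
            linear_combination h5
          rw [Prod.ext_iff]
          rw [hs, ht] at hx hy
          constructor
          · rw [hx]; simp only [hS1_def]; ring
          · rw [hy]; simp only [hS1_def]; ring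
        · right
          have ht : t = -r := by linear_combination h
          have h4 : (a*r)*(i*s + p) = 0 := by
            linear_combination (-i)*h1 + hpr + (a*i*s)*ht
          have h5 : i*s + p = 0 := (mul_eq_zero.1 h4).resolve_left har
          have hs : s = -(p/i) := by
            field_simp
            linear_combination h5
          rw [Prod.ext_iff]
          rw [hs, ht] at hx hy
          constructor
          · rw [hx]; simp only [hS2_def]; ring
          · rw [hy]; simp only [hS2_def]; ring
      · rintro (rfl | rfl)
        · refine ⟨?_, ?_, ?_⟩
          · rw [key, hS1s, hS1t]
            field_simp
            linear_combination hpr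
          · intro h
            have hv1 := (huv S₁).2
            rw [h, hS1t] at hv1
            simp only [Prod.fst_zero, Prod.snd_zero, mul_zero, sub_zero] at hv1
            apply hi1
            have : r * i = r * 1 := by
              field_simp at hv1
              linear_combination -hv1
            exact mul_left_cancel₀ hr this
          · rw [key, (huv S₁).1, hS1s]
            ring
        · refine ⟨?_, ?_, ?_⟩
          · rw [key, hS2s, hS2t]
            field_simp
            linear_combination hpr
          · intro h
            have hu1 := (huv S₂).1
            rw [h, hS2s] at hu1
            simp only [Prod.fst_zero, Prod.snd_zero, mul_zero, add_zero] at hu1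
            apply hi1
            have : p * i = p * 1 := by
              field_simp at hu1
              linear_combination -hu1
            exact mul_left_cancel₀ hp this
          · rw [key, (huv S₂).2, hS2t]
            ring
    rw [hset]
    exact Finset.card_pair hS1S2
end
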